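/- arXiv:1702.03090 — 4 statements merged into one kernel-verified Lean document; each statement's English description precedes it below -/
import Mathlib

section
/- For every positive symmetric n×n real matrix H and every k ∈ (0, 1/n], one has (det H)^k ≤ 1 - n·k + k·trace(H). -/
/-!
Weighted AM–GM with weight `k` on each eigenvalue of `H` and the remaining weight `1 - n k`
on the number `1` gives `∏ μᵢ ^ k * 1 ^ (1 - n k) ≤ k ∑ μᵢ + (1 - n k)`, which is the claim
since `det H = ∏ μᵢ` and `trace H = ∑ μᵢ`.
-/

open Finset

namespace Real

theorem prod_rpow_le_one_sub_card_mul_add_mul_sum {ι : Type*} [Fintype ι] {x : ι → ℝ}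
    (hx : ∀ i, 0 ≤ x i) {k : ℝ} (hk₀ : 0 ≤ k) (hk : Fintype.card ι * k ≤ 1) :
    ∏ i, x i ^ k ≤ 1 - Fintype.card ι * k + k * ∑ i, x i := by
  let w : Option ι → ℝ := fun o => o.elim (1 - Fintype.card ι * k) fun _ => k
  let z : Option ι → ℝ := fun o => o.elim 1 x
  have amgm := geom_mean_le_arith_mean_weighted univ w z
    (by rintro (_ | i) _ <;> simp [w, hk₀, hk])
    (by simp [w, Fintype.sum_option])
    (by rintro (_ | i) _ <;> simp [z, hx])
  simpa [w, z, Fintype.prod_option, Fintype.sum_option, mul_sum] using amgm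

end Real

theorem Matrix.PosSemidef.det_rpow_le_one_sub_card_mul_add_mul_trace {ι : Type*} [Fintype ι]
    [DecidableEq ι] {H : Matrix ι ι ℝ} (hH : H.PosSemidef) {k : ℝ} (hk₀ : 0 ≤ k)
    (hk : Fintype.card ι * k ≤ 1) :
    H.det ^ k ≤ 1 - Fintype.card ι * k + k * H.trace := by
  rw [hH.isHermitian.det_eq_prod_eigenvalues, hH.isHermitian.trace_eq_sum_eigenvalues]
  simp only [RCLike.ofReal_real_eq_id, id]
  rw [← Real.finsetProd_rpow _ _ fun i _ => hH.eigenvalues_nonneg i]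
  exact Real.prod_rpow_le_one_sub_card_mul_add_mul_sum hH.eigenvalues_nonneg hk₀ hk

theorem det_rpow_le_of_posDef_general {n : ℕ}
    (H : Matrix (Fin n) (Fin n) ℝ) (hH : H.PosDef)
    (k : ℝ) (hk0 : 0 < k) (hk : k ≤ 1 / n) :
    H.det ^ k ≤ 1 - n * k + k * H.trace := by
  have hnk : (n : ℝ) * k ≤ 1 := mul_comm k n ▸ mul_le_of_le_div₀ zero_le_one n.cast_nonneg hk
  simpa using hH.posSemidef.det_rpow_le_one_sub_card_mul_add_mul_trace hk0.le (by simpa using hnk)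

theorem det_rpow_le_of_posDef {n : ℕ} (hn : 1 ≤ n)
    (H : Matrix (Fin n) (Fin n) ℝ) (hH : H.PosDef) (hsymm : H.IsSymm)
    (k : ℝ) (hk0 : 0 < k) (hk : k ≤ 1 / n) :
    H.det ^ k ≤ 1 - n * k + k * H.trace :=
  det_rpow_le_of_posDef_general H hH k hk0 hk
end

section
/- For every positive symmetric n×n real matrix H and every real k < 0, one has (det H)^k ≥ 1 - n·k + k·trace(H). -/
/-!
By the spectral theorem, `log det H - (tr H - n) = ∑ᵢ (log λᵢ - (λᵢ - 1)) ≤ 0`, and for `k ≤ 0`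
the tangent line bound `exp t ≥ 1 + t` at `t = k log det H ≥ k (tr H - n)` gives the claim.
-/

open Matrix

theorem Real.log_prod_le_sum_sub_card {ι : Type*} (s : Finset ι) {f : ι → ℝ}
    (hf : ∀ i ∈ s, 0 < f i) : Real.log (∏ i ∈ s, f i) ≤ ∑ i ∈ s, f i - s.card := by
  rw [Real.log_prod fun i hi => (hf i hi).ne']
  calc ∑ i ∈ s, Real.log (f i) ≤ ∑ i ∈ s, (f i - 1) :=
        Finset.sum_le_sum fun i hi => Real.log_le_sub_one_of_pos (hf i hi)
    _ = ∑ i ∈ s, f i - s.card := by simp [Finset.sum_sub_distrib]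

theorem Real.one_add_mul_le_rpow_of_log_le {x y k : ℝ} (hx : 0 < x) (hk : k ≤ 0)
    (hxy : Real.log x ≤ y) : 1 + k * y ≤ x ^ k := by
  calc 1 + k * y ≤ Real.log x * k + 1 := by linarith [mul_le_mul_of_nonpos_left hxy hk]
    _ ≤ x ^ k := by rw [Real.rpow_def_of_pos hx]; exact Real.add_one_le_exp _

theorem Matrix.PosDef.log_det_le_trace_sub_card {ι : Type*} [Fintype ι] [DecidableEq ι]
    {A : Matrix ι ι ℝ} (hA : A.PosDef) : Real.log A.det ≤ A.trace - Fintype.card ι := by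
  have hdet : A.det = ∏ i, hA.1.eigenvalues i := by simpa using hA.1.det_eq_prod_eigenvalues
  have htrace : A.trace = ∑ i, hA.1.eigenvalues i := by simpa using hA.1.trace_eq_sum_eigenvalues
  rw [hdet, htrace]
  exact Real.log_prod_le_sum_sub_card _ fun i _ => hA.eigenvalues_pos i

theorem det_rpow_ge_of_posDef_general {n : ℕ}
    (H : Matrix (Fin n) (Fin n) ℝ) (hH : H.PosDef)
    (k : ℝ) (hk : k < 0) :
    H.det ^ k ≥ 1 - n * k + k * H.trace := by
  have hlog : Real.log H.det ≤ H.trace - n := by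
    simpa using hH.log_det_le_trace_sub_card
  have := Real.one_add_mul_le_rpow_of_log_le hH.det_pos hk.le hlog
  linarith

theorem det_rpow_ge_of_posDef {n : ℕ} (hn : 1 ≤ n)
    (H : Matrix (Fin n) (Fin n) ℝ) (hH : H.PosDef) (hsymm : H.IsSymm)
    (k : ℝ) (hk : k < 0) :
    H.det ^ k ≥ 1 - n * k + k * H.trace :=
  det_rpow_ge_of_posDef_general H hH k hk
end

section
/- Let n ≥ 1, s, t ∈ [0,1] with s + t = 1, and let H, g, W : ℝⁿ → (0, ∞] be measurable functions such that H(s·x + t·y) ≤ s·g(x) + t·W(y) for all x, y ∈ ℝⁿ (using the convention that sums with ∞ are ∞), and ∫ g^(−n) dx = ∫ W^(−n) dx = 1. Then ∫ H^(−n) dx ≥ 1. -/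
open MeasureTheory ENNReal

open Set Filter Topology Pointwise


/-- Layer cake for ENNReal-valued functions on a sigma-finite space. -/
lemma layercake {α : Type*} [MeasurableSpace α] (μ : Measure α) [SigmaFinite μ]
    (h : α → ℝ≥0∞) (hm : Measurable h) :
    ∫⁻ x, h x ∂μ = ∫⁻ l in Ioi (0:ℝ), μ {x | ENNReal.ofReal l < h x} := by
  have hset : MeasurableSet {p : ℝ × α | ENNReal.ofReal p.1 < h p.2} := by
    have : Measurable fun p : ℝ × α => (ENNReal.ofReal p.1, h p.2) :=
      (ENNReal.measurable_ofReal.comp measurable_fst).prodMk (hm.comp measurable_snd)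
    exact this measurableSet_lt'
  set S := {p : ℝ × α | ENNReal.ofReal p.1 < h p.2} with hS
  have hsec : ∀ l : ℝ, MeasurableSet {x | ENNReal.ofReal l < h x} := by
    intro l
    exact hset.preimage (measurable_prodMk_left)
  have hsec' : ∀ x : α, MeasurableSet {l : ℝ | ENNReal.ofReal l < h x} := by
    intro x
    exact hset.preimage (measurable_prodMk_right)
  have key : ∫⁻ l in Ioi (0:ℝ), μ {x | ENNReal.ofReal l < h x}
      = ∫⁻ x, (volume.restrict (Ioi (0:ℝ))) {l | ENNReal.ofReal l < h x} ∂μ := by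
    have h1 : ∀ l : ℝ, μ {x | ENNReal.ofReal l < h x}
        = ∫⁻ x, ({x | ENNReal.ofReal l < h x}).indicator (fun _ => (1:ℝ≥0∞)) x ∂μ := by
      intro l; exact (lintegral_indicator_one (hsec l)).symm
    have h2 : ∀ x : α, (volume.restrict (Ioi (0:ℝ))) {l | ENNReal.ofReal l < h x}
        = ∫⁻ l, ({l | ENNReal.ofReal l < h x}).indicator (fun _ => (1:ℝ≥0∞)) l
            ∂(volume.restrict (Ioi (0:ℝ))) := by
      intro x; exact (lintegral_indicator_one (hsec' x)).symm
    simp only [h1, h2]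
    refine lintegral_lintegral_swap ?_
    have : Function.uncurry (fun (l : ℝ) (x : α) =>
        ({x | ENNReal.ofReal l < h x}).indicator (fun _ => (1:ℝ≥0∞)) x)
        = S.indicator (fun _ => (1:ℝ≥0∞)) := by
      funext p; rcases p with ⟨l, x⟩
      by_cases hp : ENNReal.ofReal l < h x <;>
        simp [Function.uncurry, Set.indicator, hp, hS]
    rw [this]
    exact ((measurable_const.indicator hset)).aemeasurable
  rw [key]
  refine lintegral_congr (fun x => ?_)
  rw [Measure.restrict_apply (hsec' x)]
  by_cases htop : h x = ∞
  · have : {l : ℝ | ENNReal.ofReal l < h x} ∩ Ioi 0 = Ioi 0 := by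
      ext l; simp [htop]
    rw [this, htop]
    simp [Real.volume_Ioi]
  · have : {l : ℝ | ENNReal.ofReal l < h x} ∩ Ioi 0 = Ioo 0 ((h x).toReal) := by
      ext l
      constructor
      · rintro ⟨hl1, hl2⟩
        exact ⟨hl2, (ENNReal.ofReal_lt_iff_lt_toReal (le_of_lt hl2) htop).mp hl1⟩
      · rintro ⟨hl2, hl1⟩
        exact ⟨(ENNReal.ofReal_lt_iff_lt_toReal (le_of_lt hl2) htop).mpr hl1, hl2⟩
    rw [this, Real.volume_Ioo]
    simp [ENNReal.ofReal_toReal htop]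
open MeasureTheory ENNReal Set Pointwise

/-- Compact case of one-dimensional Brunn-Minkowski. -/
lemma bm_compact {P Q : Set ℝ} (hP : IsCompact P) (hQ : IsCompact Q)
    (hPne : P.Nonempty) (hQne : Q.Nonempty) :
    volume P + volume Q ≤ volume (P + Q) := by
  set a := sSup P
  set b := sInf Q
  have haP : a ∈ P := hP.sSup_mem hPne
  have hbQ : b ∈ Q := hQ.sInf_mem hQne
  have hU : (b +ᵥ P) ∪ (a +ᵥ Q) ⊆ P + Q := by
    rintro z (⟨p, hp, rfl⟩ | ⟨q, hq, rfl⟩)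
    · exact ⟨p, hp, b, hbQ, by simp [vadd_eq_add]; ring⟩
    · exact ⟨a, haP, q, hq, by simp [vadd_eq_add]⟩
  have hint : (b +ᵥ P) ∩ (a +ᵥ Q) ⊆ {a + b} := by
    rintro z ⟨⟨p, hp, rfl⟩, ⟨q, hq, hz⟩⟩
    have hpb : (fun x => b +ᵥ x) p = b + p := rfl
    have hqa : (fun x => a +ᵥ x) q = a + q := rfl
    rw [hpb] at hz ⊢
    rw [hqa] at hz
    have h1 : b + p ≤ a + b := by
      have := le_csSup hP.bddAbove hp; linarith
    have h2 : a + b ≤ b + p := by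
      rw [← hz]
      have := csInf_le hQ.bddBelow hq; linarith
    simp [le_antisymm h1 h2, add_comm]
  have hmeas : MeasurableSet (a +ᵥ Q) := (hQ.vadd a).measurableSet
  calc volume P + volume Q
      = volume (b +ᵥ P) + volume (a +ᵥ Q) := by rw [measure_vadd, measure_vadd]
    _ = volume ((b +ᵥ P) ∪ (a +ᵥ Q)) + volume ((b +ᵥ P) ∩ (a +ᵥ Q)) :=
        (measure_union_add_inter _ hmeas).symm
    _ ≤ volume (P + Q) + 0 :=
        add_le_add (measure_mono hU) (le_trans (measure_mono hint) (by simp))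
    _ = volume (P + Q) := by simp

/-- One-dimensional Brunn-Minkowski, with scaling factors. -/
lemma bm1 {s t : ℝ} (hs : 0 ≤ s) (ht : 0 ≤ t) {A B S : Set ℝ}
    (hA : MeasurableSet A) (hB : MeasurableSet B)
    (hAne : A.Nonempty) (hBne : B.Nonempty)
    (hsub : ∀ x ∈ A, ∀ y ∈ B, s * x + t * y ∈ S) :
    ENNReal.ofReal s * volume A + ENNReal.ofReal t * volume B ≤ volume S := by
  obtain ⟨x₀, hx₀⟩ := hAne
  obtain ⟨y₀, hy₀⟩ := hBne
  have main : ∀ KA KB : Set ℝ, IsCompact KA → KA ⊆ A → IsCompact KB → KB ⊆ B →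
      ENNReal.ofReal s * volume KA + ENNReal.ofReal t * volume KB ≤ volume S := by
    intro KA KB hKA hKAsub hKB hKBsub
    set KA' := insert x₀ KA with hKA'def
    set KB' := insert y₀ KB with hKB'def
    have hKA' : IsCompact KA' := hKA.insert x₀
    have hKB' : IsCompact KB' := hKB.insert y₀
    have hsubS : (s • KA') + (t • KB') ⊆ S := by
      rintro z ⟨p, ⟨x, hx, rfl⟩, q, ⟨y, hy, rfl⟩, rfl⟩
      exact hsub x (by rcases hx with rfl | hx; exacts [hx₀, hKAsub hx])
        y (by rcases hy with rfl | hy; exacts [hy₀, hKBsub hy])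
    have hvolA : volume (s • KA') = ENNReal.ofReal s * volume KA' := by
      rw [Measure.addHaar_smul_of_nonneg volume hs]; simp
    have hvolB : volume (t • KB') = ENNReal.ofReal t * volume KB' := by
      rw [Measure.addHaar_smul_of_nonneg volume ht]; simp
    calc ENNReal.ofReal s * volume KA + ENNReal.ofReal t * volume KB
        ≤ ENNReal.ofReal s * volume KA' + ENNReal.ofReal t * volume KB' :=
          add_le_add (mul_le_mul_right (measure_mono (subset_insert x₀ KA)) _)
            (mul_le_mul_right (measure_mono (subset_insert y₀ KB)) _)
      _ = volume (s • KA') + volume (t • KB') := by rw [hvolA, hvolB]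
      _ ≤ volume ((s • KA') + (t • KB')) :=
          bm_compact (hKA'.smul s) (hKB'.smul t)
            (Nonempty.smul_set ⟨x₀, mem_insert _ _⟩) (Nonempty.smul_set ⟨y₀, mem_insert _ _⟩)
      _ ≤ volume S := measure_mono hsubS
  have repr : ∀ (C : Set ℝ), MeasurableSet C → ∀ c : ℝ≥0∞,
      c * volume C = ⨆ K : {K : Set ℝ // IsCompact K ∧ K ⊆ C}, c * volume K.1 := by
    intro C hC c
    rw [hC.measure_eq_iSup_isCompact, ENNReal.mul_iSup]
    apply le_antisymm
    · refine iSup_le fun K => ?_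
      rw [ENNReal.mul_iSup]; refine iSup_le fun hsub => ?_
      rw [ENNReal.mul_iSup]; refine iSup_le fun hcpt => ?_
      exact le_iSup (fun K : {K : Set ℝ // IsCompact K ∧ K ⊆ C} => c * volume K.1)
        ⟨K, hcpt, hsub⟩
    · refine iSup_le fun K => ?_
      refine le_iSup_of_le K.1 ?_
      rw [ENNReal.mul_iSup]
      refine le_iSup_of_le K.2.2 ?_
      rw [ENNReal.mul_iSup]
      exact le_iSup_of_le K.2.1 le_rfl
  haveI : Nonempty {K : Set ℝ // IsCompact K ∧ K ⊆ A} :=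
    ⟨⟨∅, isCompact_empty, empty_subset _⟩⟩
  haveI : Nonempty {K : Set ℝ // IsCompact K ∧ K ⊆ B} :=
    ⟨⟨∅, isCompact_empty, empty_subset _⟩⟩
  rw [repr A hA, repr B hB]
  exact iSup_add_iSup_le fun KA KB => main KA.1 KB.1 KA.2.1 KA.2.2 KB.2.1 KB.2.2

/-- Min-form layer cake lemma in one dimension. -/
lemma minlemma {s t : ℝ} (hs : 0 ≤ s) (ht : 0 ≤ t)
    (u v h : ℝ → ℝ≥0∞) (hu : Measurable u) (hv : Measurable v) (hh : Measurable h)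
    (hyp : ∀ x y, min (u x) (v y) ≤ h (s * x + t * y)) :
    ENNReal.ofReal s * (∫⁻ x, min (u x) ((⨆ z, u z) ⊓ (⨆ z, v z)))
      + ENNReal.ofReal t * (∫⁻ x, min (v x) ((⨆ z, u z) ⊓ (⨆ z, v z)))
      ≤ ∫⁻ x, h x := by
  set M := (⨆ z, u z) ⊓ (⨆ z, v z) with hM
  have humin : Measurable fun x => min (u x) M := hu.min measurable_const
  have hvmin : Measurable fun x => min (v x) M := hv.min measurable_const
  rw [layercake volume _ humin, layercake volume _ hvmin, layercake volume _ hh]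
  have hmeasu : Measurable fun l : ℝ => volume {x | ENNReal.ofReal l < min (u x) M} := by
    apply Antitone.measurable
    intro l₁ l₂ hl
    exact measure_mono fun x hx => lt_of_le_of_lt (ENNReal.ofReal_le_ofReal hl) hx
  have hmeasv : Measurable fun l : ℝ => volume {x | ENNReal.ofReal l < min (v x) M} := by
    apply Antitone.measurable
    intro l₁ l₂ hl
    exact measure_mono fun x hx => lt_of_le_of_lt (ENNReal.ofReal_le_ofReal hl) hx
  rw [← lintegral_const_mul _ hmeasu, ← lintegral_const_mul _ hmeasv,
    ← lintegral_add_left (hmeasu.const_mul _)]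
  refine lintegral_mono_ae ?_
  filter_upwards [self_mem_ae_restrict (measurableSet_Ioi : MeasurableSet (Ioi (0:ℝ)))]
  intro l hl
  by_cases hlM : ENNReal.ofReal l < M
  · have hsetu : {x | ENNReal.ofReal l < min (u x) M} = {x | ENNReal.ofReal l < u x} := by
      ext x; simp [lt_min_iff, hlM]
    have hsetv : {x | ENNReal.ofReal l < min (v x) M} = {x | ENNReal.ofReal l < v x} := by
      ext x; simp [lt_min_iff, hlM]
    rw [hsetu, hsetv]
    have hune : {x | ENNReal.ofReal l < u x}.Nonempty := by
      have : ENNReal.ofReal l < ⨆ z, u z := lt_of_lt_of_le hlM inf_le_left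
      obtain ⟨x, hx⟩ := lt_iSup_iff.mp this
      exact ⟨x, hx⟩
    have hvne : {x | ENNReal.ofReal l < v x}.Nonempty := by
      have : ENNReal.ofReal l < ⨆ z, v z := lt_of_lt_of_le hlM inf_le_right
      obtain ⟨x, hx⟩ := lt_iSup_iff.mp this
      exact ⟨x, hx⟩
    refine bm1 hs ht (hu (measurableSet_Ioi (a := ENNReal.ofReal l))) (hv (measurableSet_Ioi (a := ENNReal.ofReal l))) hune hvne ?_
    intro x hx y hy
    exact lt_of_lt_of_le (lt_min hx hy) (hyp x y)
  · have hzu : {x | ENNReal.ofReal l < min (u x) M} = ∅ := by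
      ext x
      simp only [mem_setOf_eq, mem_empty_iff_false, iff_false, not_lt, lt_min_iff]
      intro hcon
      exact absurd hcon.2 hlM
    have hzv : {x | ENNReal.ofReal l < min (v x) M} = ∅ := by
      ext x
      simp only [mem_setOf_eq, mem_empty_iff_false, iff_false, not_lt, lt_min_iff]
      intro hcon
      exact absurd hcon.2 hlM
    rw [hzu, hzv]
    simp


lemma cauchy2 {θ s t A₁ A₂ B₁ B₂ : ℝ} (hθ : 0 < θ) (hθ1 : θ < 1)
    (hs : 0 < s) (ht : 0 < t) (hst : s + t = 1)
    (hA₁ : 0 < A₁) (hA₂ : 0 < A₂) (hB₁ : 0 < B₁) (hB₂ : 0 < B₂) :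
    s * (A₁ ^ θ * B₁ ^ (1 - θ)) + t * (A₂ ^ θ * B₂ ^ (1 - θ))
      ≤ (s * A₁ + t * A₂) ^ θ * (s * B₁ + t * B₂) ^ (1 - θ) := by
  set SA := s * A₁ + t * A₂ with hSA
  set SB := s * B₁ + t * B₂ with hSB
  have hSApos : 0 < SA := by positivity
  have hSBpos : 0 < SB := by positivity
  have key : ∀ A B : ℝ, 0 < A → 0 < B →
      A ^ θ * B ^ (1 - θ) ≤ SA ^ θ * SB ^ (1 - θ) * (θ * (A / SA) + (1 - θ) * (B / SB)) := by
    intro A B hA hB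
    have h1 : (A / SA) ^ θ * (B / SB) ^ (1 - θ) ≤ θ * (A / SA) + (1 - θ) * (B / SB) :=
      Real.geom_mean_le_arith_mean2_weighted (le_of_lt hθ) (by linarith)
        (by positivity) (by positivity) (by ring)
    have e : A ^ θ * B ^ (1 - θ)
        = SA ^ θ * SB ^ (1 - θ) * ((A / SA) ^ θ * (B / SB) ^ (1 - θ)) := by
      rw [Real.div_rpow (le_of_lt hA) (le_of_lt hSApos),
        Real.div_rpow (le_of_lt hB) (le_of_lt hSBpos)]
      field_simp
    rw [e]
    exact mul_le_mul_of_nonneg_left h1 (by positivity)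
  calc s * (A₁ ^ θ * B₁ ^ (1 - θ)) + t * (A₂ ^ θ * B₂ ^ (1 - θ))
      ≤ s * (SA ^ θ * SB ^ (1 - θ) * (θ * (A₁ / SA) + (1 - θ) * (B₁ / SB)))
        + t * (SA ^ θ * SB ^ (1 - θ) * (θ * (A₂ / SA) + (1 - θ) * (B₂ / SB))) := by
        have k1 := key A₁ B₁ hA₁ hB₁
        have k2 := key A₂ B₂ hA₂ hB₂
        have := mul_le_mul_of_nonneg_left k1 (le_of_lt hs)
        have := mul_le_mul_of_nonneg_left k2 (le_of_lt ht)
        linarith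
    _ = SA ^ θ * SB ^ (1 - θ) *
        (θ * ((s * A₁ + t * A₂) / SA) + (1 - θ) * ((s * B₁ + t * B₂) / SB)) := by ring
    _ = SA ^ θ * SB ^ (1 - θ) := by
        rw [← hSA, ← hSB, div_self (ne_of_gt hSApos), div_self (ne_of_gt hSBpos)]
        ring

/-- Reverse Hölder / means inequality, real version. -/
lemma revHolder {s t k : ℝ} (hs : 0 < s) (ht : 0 < t) (hst : s + t = 1) (hk : 0 < k)
    {a b x y : ℝ} (ha : 0 < a) (hb : 0 < b) (hx : 0 < x) (hy : 0 < y) :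
    (s * a ^ (-(1/(k+1))) + t * b ^ (-(1/(k+1)))) ^ (k+1)
      * (s * x ^ (-(1/k)) + t * y ^ (-(1/k))) ^ (-k)
      ≤ s * (x / a) + t * (y / b) := by
  set m := k + 1 with hm
  have hmpos : 0 < m := by positivity
  have hθ : 0 < 1/m := by positivity
  have hθ1 : 1/m < 1 := by
    rw [div_lt_one hmpos]; linarith
  have h1θ : 1 - 1/m = k/m := by
    field_simp
    rw [hm]; ring
  -- apply cauchy2 with A = x/a, y/b and B = x^{-1/k}, y^{-1/k}
  have main := cauchy2 (A₁ := x/a) (A₂ := y/b) (B₁ := x ^ (-(1/k))) (B₂ := y ^ (-(1/k)))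
    hθ hθ1 hs ht hst (by positivity) (by positivity)
    (Real.rpow_pos_of_pos hx _) (Real.rpow_pos_of_pos hy _)
  -- compute the left side entries
  have comp : ∀ z c : ℝ, 0 < z → 0 < c →
      (z/c) ^ (1/m) * (z ^ (-(1/k))) ^ (1 - 1/m) = c ^ (-(1/m)) := by
    intro z c hz hc
    rw [h1θ, ← Real.rpow_mul (le_of_lt hz)]
    have he : (-(1/k)) * (k/m) = -(1/m) := by
      field_simp
    rw [he, Real.div_rpow (le_of_lt hz) (le_of_lt hc), div_mul_eq_mul_div,
      ← Real.rpow_add hz]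
    simp [Real.rpow_neg (le_of_lt hc), one_div]
  rw [comp x a hx ha, comp y b hy hb] at main
  set SA := s * (x/a) + t * (y/b) with hSAd
  set SB := s * x ^ (-(1/k)) + t * y ^ (-(1/k)) with hSBd
  have hSApos : 0 < SA := by positivity
  have hSBpos : 0 < SB := by positivity
  have hLpos : 0 ≤ s * a ^ (-(1/m)) + t * b ^ (-(1/m)) := by positivity
  have main2 : (s * a ^ (-(1/m)) + t * b ^ (-(1/m))) ^ m ≤ SA * SB ^ k := by
    have h := Real.rpow_le_rpow hLpos main (le_of_lt hmpos)
    rw [Real.mul_rpow (by positivity) (by positivity), ← Real.rpow_mul (le_of_lt hSApos),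
      ← Real.rpow_mul (le_of_lt hSBpos)] at h
    have e1 : 1/m * m = 1 := by field_simp
    have e2 : (1 - 1/m) * m = k := by
      rw [h1θ]; field_simp
    rw [e1, e2, Real.rpow_one] at h
    exact h
  calc (s * a ^ (-(1/m)) + t * b ^ (-(1/m))) ^ m * SB ^ (-k)
      ≤ (SA * SB ^ k) * SB ^ (-k) :=
        mul_le_mul_of_nonneg_right main2 (le_of_lt (Real.rpow_pos_of_pos hSBpos _))
    _ = SA := by
        rw [mul_assoc, ← Real.rpow_add hSBpos]
        simp


noncomputable def bblMean (s t r : ℝ) (α β : ℝ≥0∞) : ℝ≥0∞ :=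
  if r = 0 then min α β
  else (ENNReal.ofReal s * α ^ (-(1/r)) + ENNReal.ofReal t * β ^ (-(1/r))) ^ (-r)

lemma rpow_neg_antitone {c : ℝ} (hc : 0 ≤ c) {x y : ℝ≥0∞} (h : x ≤ y) :
    y ^ (-c) ≤ x ^ (-c) := by
  rw [ENNReal.rpow_neg, ENNReal.rpow_neg]
  exact ENNReal.inv_le_inv.mpr (ENNReal.rpow_le_rpow h hc)

lemma bblMean_zero_left {s t r : ℝ} (hs : 0 < s) (hr : 0 ≤ r) (β : ℝ≥0∞) :
    bblMean s t r 0 β = 0 := by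
  unfold bblMean
  by_cases h : r = 0
  · simp [h]
  · have hrpos : 0 < r := lt_of_le_of_ne hr (Ne.symm h)
    rw [if_neg h]
    have h0 : (0:ℝ≥0∞) ^ (-(1/r)) = ∞ := ENNReal.zero_rpow_of_neg (neg_neg_of_pos (by positivity))
    have h1 : ENNReal.ofReal s * (0:ℝ≥0∞) ^ (-(1/r)) + ENNReal.ofReal t * β ^ (-(1/r)) = ⊤ :=
      ENNReal.add_eq_top.mpr (Or.inl (by rw [h0]; exact ENNReal.mul_top (ENNReal.ofReal_pos.mpr hs).ne'))
    rw [h1]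
    exact ENNReal.top_rpow_of_neg (by linarith)

lemma bblMean_zero_right {s t r : ℝ} (ht : 0 < t) (hr : 0 ≤ r) (α : ℝ≥0∞) :
    bblMean s t r α 0 = 0 := by
  unfold bblMean
  by_cases h : r = 0
  · simp [h]
  · have hrpos : 0 < r := lt_of_le_of_ne hr (Ne.symm h)
    rw [if_neg h]
    have h0 : (0:ℝ≥0∞) ^ (-(1/r)) = ∞ := ENNReal.zero_rpow_of_neg (neg_neg_of_pos (by positivity))
    have h1 : ENNReal.ofReal s * α ^ (-(1/r)) + ENNReal.ofReal t * (0:ℝ≥0∞) ^ (-(1/r)) = ⊤ :=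
      ENNReal.add_eq_top.mpr (Or.inr (by rw [h0]; exact ENNReal.mul_top (ENNReal.ofReal_pos.mpr ht).ne'))
    rw [h1]
    exact ENNReal.top_rpow_of_neg (by linarith)

lemma ofReal_min' (x y : ℝ) : ENNReal.ofReal (min x y) = min (ENNReal.ofReal x) (ENNReal.ofReal y) := by
  rcases le_total x y with h | h
  · rw [min_eq_left h, min_eq_left (ENNReal.ofReal_le_ofReal h)]
  · rw [min_eq_right h, min_eq_right (ENNReal.ofReal_le_ofReal h)]

/-- Minimum version of the reverse Hölder inequality (m = 1 case), real version. -/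
lemma revHolder_one {s t : ℝ} (hs : 0 < s) (ht : 0 < t)
    {a b x y : ℝ} (ha : 0 < a) (hb : 0 < b) (hx : 0 < x) (hy : 0 < y) :
    min x y ≤ (s * a ^ (-(1:ℝ)) + t * b ^ (-(1:ℝ))) ^ (-(1:ℝ)) * (s * (x / a) + t * (y / b)) := by
  rw [Real.rpow_neg_one, Real.rpow_neg_one, Real.rpow_neg_one]
  have hc : 0 < s * a⁻¹ + t * b⁻¹ := by positivity
  rw [← inv_mul_le_iff₀ (by positivity), inv_inv]
  calc (s * a⁻¹ + t * b⁻¹) * min x y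
      = s * (min x y / a) + t * (min x y / b) := by field_simp
    _ ≤ s * (x / a) + t * (y / b) := by
        gcongr
        · exact min_le_left x y
        · exact min_le_right x y

/-- Key arithmetic inequality (Lemma C) in ENNReal. -/
lemma lemC {s t : ℝ} (hs : 0 < s) (ht : 0 < t) (hst : s + t = 1) {m : ℝ} (hm : 1 ≤ m)
    {a b : ℝ≥0∞} (ha0 : a ≠ 0) (hat : a ≠ ∞) (hb0 : b ≠ 0) (hbt : b ≠ ∞) (X Y : ℝ≥0∞) :
    bblMean s t (m-1) X Y ≤
      (ENNReal.ofReal s * a ^ (-(1/m)) + ENNReal.ofReal t * b ^ (-(1/m))) ^ (-m)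
        * (ENNReal.ofReal s * (X / a) + ENNReal.ofReal t * (Y / b)) := by
  have hr : (0:ℝ) ≤ m - 1 := by linarith
  have hsE : ENNReal.ofReal s ≠ 0 := (ENNReal.ofReal_pos.mpr hs).ne'
  have htE : ENNReal.ofReal t ≠ 0 := (ENNReal.ofReal_pos.mpr ht).ne'
  -- the constant C is finite and nonzero
  have hE0 : ENNReal.ofReal s * a ^ (-(1/m)) + ENNReal.ofReal t * b ^ (-(1/m)) ≠ 0 := by
    intro hcon
    rw [add_eq_zero] at hcon
    exact (mul_ne_zero hsE (by simp [ENNReal.rpow_eq_zero_iff, hat, ha0,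
      neg_neg_of_pos (show (0:ℝ) < 1/m by positivity)])) hcon.1
  have hEt : ENNReal.ofReal s * a ^ (-(1/m)) + ENNReal.ofReal t * b ^ (-(1/m)) ≠ ∞ := by
    rw [ENNReal.add_ne_top]
    constructor <;> refine ENNReal.mul_ne_top ENNReal.ofReal_ne_top ?_
    · simp [ENNReal.rpow_eq_top_iff, ha0, hat]
    · simp [ENNReal.rpow_eq_top_iff, hb0, hbt]
  have hC0 : (ENNReal.ofReal s * a ^ (-(1/m)) + ENNReal.ofReal t * b ^ (-(1/m))) ^ (-m) ≠ 0 := by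
    rw [Ne, ENNReal.rpow_eq_zero_iff]
    rintro (⟨h1, _⟩ | ⟨h1, _⟩)
    · exact hE0 h1
    · exact hEt h1
  by_cases hX0 : X = 0
  · rw [hX0, bblMean_zero_left hs hr]; exact zero_le
  by_cases hY0 : Y = 0
  · rw [hY0, bblMean_zero_right ht hr]; exact zero_le
  by_cases hXt : X = ∞
  · refine le_top.trans_eq ?_
    rw [hXt]
    rw [ENNReal.top_div_of_ne_top hat, ENNReal.mul_top hsE]
    rw [ENNReal.add_eq_top.mpr (Or.inl rfl), ENNReal.mul_top hC0]
  by_cases hYt : Y = ∞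
  · refine le_top.trans_eq ?_
    rw [hYt]
    rw [ENNReal.top_div_of_ne_top hbt, ENNReal.mul_top htE]
    rw [ENNReal.add_eq_top.mpr (Or.inr rfl), ENNReal.mul_top hC0]
  -- now everything is finite and positive; pass to the reals
  set a' := a.toReal with ha'
  set b' := b.toReal with hb'
  set X' := X.toReal with hX'
  set Y' := Y.toReal with hY'
  have ha'pos : 0 < a' := ENNReal.toReal_pos ha0 hat
  have hb'pos : 0 < b' := ENNReal.toReal_pos hb0 hbt
  have hX'pos : 0 < X' := ENNReal.toReal_pos hX0 hXt
  have hY'pos : 0 < Y' := ENNReal.toReal_pos hY0 hYt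
  have haa : a = ENNReal.ofReal a' := (ENNReal.ofReal_toReal hat).symm
  have hbb : b = ENNReal.ofReal b' := (ENNReal.ofReal_toReal hbt).symm
  have hXX : X = ENNReal.ofReal X' := (ENNReal.ofReal_toReal hXt).symm
  have hYY : Y = ENNReal.ofReal Y' := (ENNReal.ofReal_toReal hYt).symm
  rw [haa, hbb, hXX, hYY]
  -- RHS as ofReal
  have hRHS : (ENNReal.ofReal s * (ENNReal.ofReal a') ^ (-(1/m))
      + ENNReal.ofReal t * (ENNReal.ofReal b') ^ (-(1/m))) ^ (-m)
      * (ENNReal.ofReal s * (ENNReal.ofReal X' / ENNReal.ofReal a')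
        + ENNReal.ofReal t * (ENNReal.ofReal Y' / ENNReal.ofReal b'))
      = ENNReal.ofReal (((s * a' ^ (-(1/m)) + t * b' ^ (-(1/m))) ^ (-m))
        * (s * (X' / a') + t * (Y' / b'))) := by
    rw [ENNReal.ofReal_rpow_of_pos ha'pos, ENNReal.ofReal_rpow_of_pos hb'pos,
      ← ENNReal.ofReal_mul hs.le, ← ENNReal.ofReal_mul ht.le,
      ← ENNReal.ofReal_add (by positivity) (by positivity),
      ENNReal.ofReal_rpow_of_pos (by positivity),
      ← ENNReal.ofReal_div_of_pos ha'pos, ← ENNReal.ofReal_div_of_pos hb'pos,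
      ← ENNReal.ofReal_mul hs.le, ← ENNReal.ofReal_mul ht.le,
      ← ENNReal.ofReal_add (by positivity) (by positivity),
      ← ENNReal.ofReal_mul (by positivity)]
  rw [hRHS]
  by_cases hm1 : m - 1 = 0
  · -- m = 1
    have hm1' : m = 1 := by linarith
    unfold bblMean
    rw [if_pos hm1, ← ofReal_min']
    refine ENNReal.ofReal_le_ofReal ?_
    subst hm1'
    simpa using revHolder_one hs ht ha'pos hb'pos hX'pos hY'pos
  · -- m > 1
    have hk : 0 < m - 1 := lt_of_le_of_ne hr (Ne.symm hm1)
    unfold bblMean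
    rw [if_neg hm1]
    rw [ENNReal.ofReal_rpow_of_pos hX'pos, ENNReal.ofReal_rpow_of_pos hY'pos,
      ← ENNReal.ofReal_mul hs.le, ← ENNReal.ofReal_mul ht.le,
      ← ENNReal.ofReal_add (by positivity) (by positivity),
      ENNReal.ofReal_rpow_of_pos (by positivity)]
    refine ENNReal.ofReal_le_ofReal ?_
    have key := revHolder hs ht hst hk ha'pos hb'pos hX'pos hY'pos
    rw [show m - 1 + 1 = m by ring] at key
    set E := s * a' ^ (-(1/m)) + t * b' ^ (-(1/m)) with hE
    have hEpos : 0 < E := by positivity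
    calc (s * X' ^ (-(1/(m-1))) + t * Y' ^ (-(1/(m-1)))) ^ (-(m-1))
        = E ^ (-m) * (E ^ m * (s * X' ^ (-(1/(m-1))) + t * Y' ^ (-(1/(m-1)))) ^ (-(m-1))) := by
          rw [← mul_assoc, ← Real.rpow_add hEpos]
          simp
      _ ≤ E ^ (-m) * (s * (X'/a') + t * (Y'/b')) := by
          refine mul_le_mul_of_nonneg_left ?_ (le_of_lt (Real.rpow_pos_of_pos hEpos _))
          exact key



section S1sec
variable {s t : ℝ}

lemma measurable_rpow_const {f : ℝ → ℝ≥0∞} (hf : Measurable f) (c : ℝ) :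
    Measurable fun x => f x ^ c :=
  ENNReal.continuous_rpow_const.measurable.comp hf

/-- One-dimensional BBL, bounded case. -/
lemma S1bdd (hs : 0 < s) (ht : 0 < t) (hst : s + t = 1) {m : ℝ} (hm : 1 ≤ m)
    (H g W : ℝ → ℝ≥0∞) (hH : Measurable H) (hg : Measurable g) (hW : Measurable W)
    (hineq : ∀ x y, H (s * x + t * y) ≤ ENNReal.ofReal s * g x + ENNReal.ofReal t * W y)
    {ε : ℝ} (hε : 0 < ε) (hgε : ∀ x, ENNReal.ofReal ε ≤ g x) (hWε : ∀ x, ENNReal.ofReal ε ≤ W x) :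
    bblMean s t (m-1) (∫⁻ x, g x ^ (-m)) (∫⁻ x, W x ^ (-m)) ≤ ∫⁻ x, H x ^ (-m) := by
  have hm0 : (0:ℝ) < m := by linarith
  set u := fun x => g x ^ (-m) with hu
  set v := fun x => W x ^ (-m) with hv
  have hum : Measurable u := measurable_rpow_const hg _
  have hvm : Measurable v := measurable_rpow_const hW _
  set a := ⨆ x, u x with ha
  set b := ⨆ x, v x with hb
  have hbound : (ENNReal.ofReal ε) ^ (-m) ≠ ∞ := by
    rw [Ne, ENNReal.rpow_eq_top_iff]
    rintro (⟨h1, _⟩ | ⟨h1, h2⟩)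
    · exact (ENNReal.ofReal_pos.mpr hε).ne' h1
    · linarith
  have hat : a ≠ ∞ := by
    refine ne_top_of_le_ne_top hbound (iSup_le fun x => ?_)
    exact rpow_neg_antitone hm0.le (hgε x)
  have hbt : b ≠ ∞ := by
    refine ne_top_of_le_ne_top hbound (iSup_le fun x => ?_)
    exact rpow_neg_antitone hm0.le (hWε x)
  by_cases ha0 : a = 0
  · have : ∫⁻ x, u x = 0 := by
      rw [lintegral_eq_zero_iff hum]
      refine Filter.Eventually.of_forall fun x => ?_
      have hx : u x ≤ a := le_iSup u x
      rw [ha0] at hx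
      simpa using le_antisymm hx (zero_le)
    rw [hu] at this
    rw [this, bblMean_zero_left hs (by linarith)]
    exact zero_le
  by_cases hb0 : b = 0
  · have : ∫⁻ x, v x = 0 := by
      rw [lintegral_eq_zero_iff hvm]
      refine Filter.Eventually.of_forall fun x => ?_
      have hx : v x ≤ b := le_iSup v x
      rw [hb0] at hx
      simpa using le_antisymm hx (zero_le)
    rw [hv] at this
    rw [this, bblMean_zero_right ht (by linarith)]
    exact zero_le
  -- the constant
  set E := ENNReal.ofReal s * a ^ (-(1/m)) + ENNReal.ofReal t * b ^ (-(1/m)) with hE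
  have hsE : ENNReal.ofReal s ≠ 0 := (ENNReal.ofReal_pos.mpr hs).ne'
  have hE0 : E ≠ 0 := by
    intro hcon
    rw [hE, add_eq_zero] at hcon
    refine (mul_ne_zero hsE ?_) hcon.1
    rw [Ne, ENNReal.rpow_eq_zero_iff]
    rintro (⟨h1, _⟩ | ⟨h1, _⟩)
    · exact ha0 h1
    · exact hat h1
  have hEt : E ≠ ∞ := by
    rw [hE, ENNReal.add_ne_top]
    constructor <;> refine ENNReal.mul_ne_top ENNReal.ofReal_ne_top ?_
    · simp [ENNReal.rpow_eq_top_iff, ha0, hat]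
    · simp [ENNReal.rpow_eq_top_iff, hb0, hbt]
  set C := E ^ (-m) with hC
  have hC0 : C ≠ 0 := by
    rw [hC, Ne, ENNReal.rpow_eq_zero_iff]
    rintro (⟨h1, _⟩ | ⟨h1, _⟩)
    · exact hE0 h1
    · exact hEt h1
  have hCt : C ≠ ∞ := by
    rw [hC, Ne, ENNReal.rpow_eq_top_iff]
    rintro (⟨h1, _⟩ | ⟨h1, h2⟩)
    · exact hE0 h1
    · linarith
  -- the pointwise min inequality
  have claim : ∀ x y, min (u x / a) (v y / b) ≤ C⁻¹ * H (s * x + t * y) ^ (-m) := by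
    intro x y
    set μ := min (u x / a) (v y / b) with hμ
    by_cases hμ0 : μ = 0
    · rw [hμ0]; exact zero_le
    have hμ1 : μ ≤ 1 := by
      refine (min_le_left _ _).trans ?_
      exact ENNReal.div_le_of_le_mul (by rw [one_mul]; exact le_iSup u x)
    have hμt : μ ≠ ∞ := ne_top_of_le_ne_top one_ne_top hμ1
    have hgx : g x ≤ a ^ (-(1/m)) * μ ^ (-(1/m)) := by
      have h1 : a * μ ≤ u x := by
        calc a * μ ≤ a * (u x / a) := mul_le_mul_right (min_le_left _ _) a
          _ ≤ u x := ENNReal.mul_div_le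
      have h2 : g x = (u x) ^ (-(1/m)) := by
        show g x = (g x ^ (-m)) ^ (-(1/m))
        rw [← ENNReal.rpow_mul, show (-m) * (-(1/m)) = 1 by field_simp, ENNReal.rpow_one]
      rw [h2, ← ENNReal.mul_rpow_of_ne_top hat hμt]
      exact rpow_neg_antitone (by positivity) h1
    have hWy : W y ≤ b ^ (-(1/m)) * μ ^ (-(1/m)) := by
      have h1 : b * μ ≤ v y := by
        calc b * μ ≤ b * (v y / b) := mul_le_mul_right (min_le_right _ _) b
          _ ≤ v y := ENNReal.mul_div_le
      have h2 : W y = (v y) ^ (-(1/m)) := by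
        show W y = (W y ^ (-m)) ^ (-(1/m))
        rw [← ENNReal.rpow_mul, show (-m) * (-(1/m)) = 1 by field_simp, ENNReal.rpow_one]
      rw [h2, ← ENNReal.mul_rpow_of_ne_top hbt hμt]
      exact rpow_neg_antitone (by positivity) h1
    have hH1 : H (s * x + t * y) ≤ E * μ ^ (-(1/m)) := by
      calc H (s * x + t * y) ≤ ENNReal.ofReal s * g x + ENNReal.ofReal t * W y := hineq x y
        _ ≤ ENNReal.ofReal s * (a ^ (-(1/m)) * μ ^ (-(1/m)))
            + ENNReal.ofReal t * (b ^ (-(1/m)) * μ ^ (-(1/m))) := by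
            gcongr
        _ = E * μ ^ (-(1/m)) := by rw [hE]; ring
    have hμE : μ ^ (-(1/m)) ≠ ∞ := by
      rw [Ne, ENNReal.rpow_eq_top_iff]
      rintro (⟨h1, _⟩ | ⟨h1, h2⟩)
      · exact hμ0 h1
      · exact hμt h1
    have hfinal : C * μ ≤ H (s * x + t * y) ^ (-m) := by
      calc C * μ = (E * μ ^ (-(1/m))) ^ (-m) := by
            rw [ENNReal.mul_rpow_of_ne_top hEt hμE, ← hC, ← ENNReal.rpow_mul]
            rw [show -(1/m) * -m = 1 by field_simp, ENNReal.rpow_one]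
        _ ≤ H (s * x + t * y) ^ (-m) := rpow_neg_antitone hm0.le hH1
    rw [← ENNReal.div_eq_inv_mul]
    exact (ENNReal.le_div_iff_mul_le (Or.inl hC0) (Or.inl hCt)).mpr
      (by rw [mul_comm]; exact hfinal)
  -- apply the min lemma
  have happ := minlemma hs.le ht.le (fun x => u x / a) (fun x => v x / b)
    (fun z => C⁻¹ * H z ^ (-m))
    (hum.div_const a) (hvm.div_const b)
    ((measurable_rpow_const hH _).const_mul _)
    claim
  have hsupu : (⨆ z, u z / a) = 1 := by
    rw [← ENNReal.iSup_div, ← ha, ENNReal.div_self ha0 hat]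
  have hsupv : (⨆ z, v z / b) = 1 := by
    rw [← ENNReal.iSup_div, ← hb, ENNReal.div_self hb0 hbt]
  rw [hsupu, hsupv] at happ
  simp only [min_self] at happ
  have hminu : ∀ x : ℝ, min (u x / a) 1 = u x / a := by
    intro x
    exact min_eq_left (ENNReal.div_le_of_le_mul (by rw [one_mul]; exact le_iSup u x))
  have hminv : ∀ x : ℝ, min (v x / b) 1 = v x / b := by
    intro x
    exact min_eq_left (ENNReal.div_le_of_le_mul (by rw [one_mul]; exact le_iSup v x))
  simp only [hminu, hminv] at happ
  have hiu : ∫⁻ x, u x / a = (∫⁻ x, u x) / a := by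
    simp only [div_eq_mul_inv]
    exact lintegral_mul_const' a⁻¹ u (by simp [ha0])
  have hiv : ∫⁻ x, v x / b = (∫⁻ x, v x) / b := by
    simp only [div_eq_mul_inv]
    exact lintegral_mul_const' b⁻¹ v (by simp [hb0])
  have hih : ∫⁻ x, C⁻¹ * H x ^ (-m) = C⁻¹ * ∫⁻ x, H x ^ (-m) :=
    lintegral_const_mul' C⁻¹ _ (by simp [hC0])
  rw [hiu, hiv, hih] at happ
  -- combine with lemC
  calc bblMean s t (m-1) (∫⁻ x, g x ^ (-m)) (∫⁻ x, W x ^ (-m))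
      ≤ C * (ENNReal.ofReal s * ((∫⁻ x, u x) / a) + ENNReal.ofReal t * ((∫⁻ x, v x) / b)) := by
        rw [hC, hE]
        exact lemC hs ht hst hm ha0 hat hb0 hbt _ _
    _ ≤ C * (C⁻¹ * ∫⁻ x, H x ^ (-m)) := mul_le_mul_right happ C
    _ = ∫⁻ x, H x ^ (-m) := by
        rw [← mul_assoc, ENNReal.mul_inv_cancel hC0 hCt, one_mul]
end S1sec

section S1full
variable {s t : ℝ}

lemma sup_rpow_neg {m : ℝ} (hm : 0 ≤ m) (x c : ℝ≥0∞) :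
    (x ⊔ c) ^ (-m) = x ^ (-m) ⊓ c ^ (-m) := by
  rcases le_total x c with h | h
  · rw [sup_eq_right.mpr h, inf_eq_right.mpr (rpow_neg_antitone hm h)]
  · rw [sup_eq_left.mpr h, inf_eq_left.mpr (rpow_neg_antitone hm h)]

lemma iSup_min_eq (u : ℝ≥0∞) (d : ℕ → ℝ≥0∞) (hd' : ∀ r : ℝ, ∃ N, ENNReal.ofReal r ≤ d N) :
    ⨆ N, min u (d N) = u := by
  refine le_antisymm (iSup_le fun N => min_le_left _ _) ?_
  by_cases hu : u = ⊤
  · subst hu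
    refine le_iSup_iff.mpr fun b hb => ?_
    have hbtop : b = ⊤ := ENNReal.eq_top_of_forall_nnreal_le fun r => by
      obtain ⟨N, hN⟩ := hd' (r:ℝ)
      calc (r : ℝ≥0∞) = ENNReal.ofReal (r:ℝ) := ENNReal.ofReal_coe_nnreal.symm
        _ ≤ d N := hN
        _ ≤ min ⊤ (d N) := le_min le_top le_rfl
        _ ≤ b := hb N
    rw [hbtop]
  · obtain ⟨N, hN⟩ := hd' u.toReal
    rw [ENNReal.ofReal_toReal hu] at hN
    exact le_iSup_of_le N (le_min le_rfl hN)

/-- One-dimensional Borell-Brascamp-Lieb. -/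
theorem S1 (hs : 0 < s) (ht : 0 < t) (hst : s + t = 1) {m : ℝ} (hm : 1 ≤ m)
    (H g W : ℝ → ℝ≥0∞) (hH : Measurable H) (hg : Measurable g) (hW : Measurable W)
    (hineq : ∀ x y, H (s * x + t * y) ≤ ENNReal.ofReal s * g x + ENNReal.ofReal t * W y) :
    bblMean s t (m-1) (∫⁻ x, g x ^ (-m)) (∫⁻ x, W x ^ (-m)) ≤ ∫⁻ x, H x ^ (-m) := by
  have hm0 : (0:ℝ) < m := by linarith
  -- truncated functions
  set gN := fun (N : ℕ) (x : ℝ) => g x ⊔ ENNReal.ofReal (1/(N+1)) with hgN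
  set WN := fun (N : ℕ) (x : ℝ) => W x ⊔ ENNReal.ofReal (1/(N+1)) with hWN
  have hbddcase : ∀ N : ℕ, bblMean s t (m-1) (∫⁻ x, gN N x ^ (-m)) (∫⁻ x, WN N x ^ (-m))
      ≤ ∫⁻ x, H x ^ (-m) := by
    intro N
    have hεpos : (0:ℝ) < 1/(N+1) := by positivity
    refine S1bdd hs ht hst hm H (gN N) (WN N) hH (hg.sup measurable_const)
      (hW.sup measurable_const) (fun x y => ?_) hεpos (fun x => le_sup_right)
      (fun x => le_sup_right)
    exact (hineq x y).trans (add_le_add (mul_le_mul_right le_sup_left _)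
      (mul_le_mul_right le_sup_left _))
  -- monotone convergence of the integrals
  have hdmono : Monotone (fun N : ℕ => (ENNReal.ofReal (1/((N:ℝ)+1))) ^ (-m)) := by
    intro N M hNM
    refine rpow_neg_antitone hm0.le (ENNReal.ofReal_le_ofReal ?_)
    have hNM' : (N:ℝ) ≤ (M:ℝ) := Nat.cast_le.mpr hNM
    exact one_div_le_one_div_of_le (by positivity) (by linarith)
  have hdtop : ∀ r : ℝ, ∃ N : ℕ, ENNReal.ofReal r ≤ (ENNReal.ofReal (1/((N:ℝ)+1))) ^ (-m) := by
    intro r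
    obtain ⟨N, hN⟩ := exists_nat_ge r
    refine ⟨N, ?_⟩
    have h1 : (ENNReal.ofReal (1/((N:ℝ)+1))) ^ (-m) = ENNReal.ofReal (((N:ℝ)+1) ^ m) := by
      rw [ENNReal.ofReal_rpow_of_pos (by positivity)]
      congr 1
      rw [one_div, Real.inv_rpow (by positivity), Real.rpow_neg (by positivity), inv_inv]
    rw [h1]
    refine ENNReal.ofReal_le_ofReal (hN.trans ?_)
    calc (N:ℝ) ≤ (N:ℝ) + 1 := by linarith
      _ = ((N:ℝ)+1) ^ (1:ℝ) := by rw [Real.rpow_one]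
      _ ≤ ((N:ℝ)+1) ^ m := Real.rpow_le_rpow_of_exponent_le (by linarith) hm
  have hconvg : Filter.Tendsto (fun N => ∫⁻ x, gN N x ^ (-m)) atTop
      (𝓝 (∫⁻ x, g x ^ (-m))) := by
    have heq : ∀ N : ℕ, (∫⁻ x, gN N x ^ (-m))
        = ∫⁻ x, min (g x ^ (-m)) ((ENNReal.ofReal (1/((N:ℝ)+1))) ^ (-m)) := by
      intro N
      refine lintegral_congr fun x => ?_
      rw [hgN]
      simp only
      rw [sup_rpow_neg hm0.le]
    simp only [heq]
    have hmc : ∫⁻ x, g x ^ (-m)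
        = ⨆ N : ℕ, ∫⁻ x, min (g x ^ (-m)) ((ENNReal.ofReal (1/((N:ℝ)+1))) ^ (-m)) := by
      rw [← lintegral_iSup]
      · refine (lintegral_congr fun x => ?_).symm
        exact iSup_min_eq _ _ hdtop
      · exact fun N => (measurable_rpow_const hg _).min measurable_const
      · intro N M hNM x
        exact min_le_min le_rfl (hdmono hNM)
    rw [hmc]
    refine tendsto_atTop_iSup ?_
    intro N M hNM
    refine lintegral_mono fun x => min_le_min le_rfl (hdmono hNM)
  have hconvW : Filter.Tendsto (fun N => ∫⁻ x, WN N x ^ (-m)) atTop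
      (𝓝 (∫⁻ x, W x ^ (-m))) := by
    have heq : ∀ N : ℕ, (∫⁻ x, WN N x ^ (-m))
        = ∫⁻ x, min (W x ^ (-m)) ((ENNReal.ofReal (1/((N:ℝ)+1))) ^ (-m)) := by
      intro N
      refine lintegral_congr fun x => ?_
      rw [hWN]
      simp only
      rw [sup_rpow_neg hm0.le]
    simp only [heq]
    have hmc : ∫⁻ x, W x ^ (-m)
        = ⨆ N : ℕ, ∫⁻ x, min (W x ^ (-m)) ((ENNReal.ofReal (1/((N:ℝ)+1))) ^ (-m)) := by
      rw [← lintegral_iSup]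
      · refine (lintegral_congr fun x => ?_).symm
        exact iSup_min_eq _ _ hdtop
      · exact fun N => (measurable_rpow_const hW _).min measurable_const
      · intro N M hNM x
        exact min_le_min le_rfl (hdmono hNM)
    rw [hmc]
    refine tendsto_atTop_iSup ?_
    intro N M hNM
    refine lintegral_mono fun x => min_le_min le_rfl (hdmono hNM)
  -- continuity of the mean
  have hmean : Filter.Tendsto
      (fun N => bblMean s t (m-1) (∫⁻ x, gN N x ^ (-m)) (∫⁻ x, WN N x ^ (-m))) atTop
      (𝓝 (bblMean s t (m-1) (∫⁻ x, g x ^ (-m)) (∫⁻ x, W x ^ (-m)))) := by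
    by_cases hr : m - 1 = 0
    · simp only [bblMean, if_pos hr]
      exact hconvg.min hconvW
    · simp only [bblMean, if_neg hr]
      refine Filter.Tendsto.comp (ENNReal.continuous_rpow_const.tendsto _) ?_
      refine Filter.Tendsto.add ?_ ?_
      · exact ENNReal.Tendsto.const_mul
          ((ENNReal.continuous_rpow_const.tendsto _).comp hconvg)
          (Or.inr ENNReal.ofReal_ne_top)
      · exact ENNReal.Tendsto.const_mul
          ((ENNReal.continuous_rpow_const.tendsto _).comp hconvW)
          (Or.inr ENNReal.ofReal_ne_top)
  exact le_of_tendsto hmean (Filter.Eventually.of_forall hbddcase)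
end S1full



lemma meas_rpow_const {α : Type*} [MeasurableSpace α] {f : α → ℝ≥0∞} (hf : Measurable f)
    (c : ℝ) : Measurable fun x => f x ^ c :=
  ENNReal.continuous_rpow_const.measurable.comp hf

theorem Sk {s t : ℝ} (hs : 0 < s) (ht : 0 < t) (hst : s + t = 1) :
    ∀ (k : ℕ), 1 ≤ k → ∀ (m : ℝ), (k:ℝ) ≤ m →
    ∀ (H g W : (Fin k → ℝ) → ℝ≥0∞), Measurable H → Measurable g → Measurable W →
    (∀ x y, H (s • x + t • y) ≤ ENNReal.ofReal s * g x + ENNReal.ofReal t * W y) →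
    bblMean s t (m - k) (∫⁻ x, g x ^ (-m)) (∫⁻ x, W x ^ (-m)) ≤ ∫⁻ x, H x ^ (-m) := by
  intro k hk
  induction k, hk using Nat.le_induction with
  | base =>
    intro m hm H g W hH hg hW hineq
    set e := MeasurableEquiv.funUnique (Fin 1) ℝ with he
    have hmp : MeasurePreserving e.symm volume volume :=
      (volume_preserving_funUnique (Fin 1) ℝ).symm e
    have hlin : ∀ a b : ℝ, e.symm (s * a + t * b) = s • e.symm a + t • e.symm b := by
      intro a b
      funext j
      rfl
    have htr : ∀ F : (Fin 1 → ℝ) → ℝ≥0∞, Measurable F →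
        (∫⁻ x, F x ^ (-m)) = ∫⁻ c : ℝ, F (e.symm c) ^ (-m) := by
      intro F hF
      exact (hmp.lintegral_comp (meas_rpow_const hF _)).symm
    rw [htr H hH, htr g hg, htr W hW]
    have := S1 hs ht hst (m := m) (by exact_mod_cast hm)
      (fun c => H (e.symm c)) (fun c => g (e.symm c)) (fun c => W (e.symm c))
      (hH.comp e.symm.measurable) (hg.comp e.symm.measurable) (hW.comp e.symm.measurable)
      (fun a b => by rw [hlin a b]; exact hineq _ _)
    simpa using this
  | succ k hk IH =>
    intro m hm H g W hH hg hW hineq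
    have hm' : (k:ℝ) ≤ m := by push_cast at hm ⊢; linarith
    have hr1 : (1:ℝ) ≤ m - k := by push_cast at hm ⊢; linarith
    have hr0 : (0:ℝ) < m - k := by linarith
    have hrne : m - (k:ℝ) ≠ 0 := ne_of_gt hr0
    set e := MeasurableEquiv.piFinSuccAbove (fun _ : Fin (k+1) => ℝ) 0 with he
    have hmp : MeasurePreserving e.symm (volume.prod volume) volume :=
      (volume_preserving_piFinSuccAbove (fun _ : Fin (k+1) => ℝ) 0).symm e
    have hcons : ∀ (c : ℝ) (z : Fin k → ℝ), e.symm (c, z) = Fin.cons c z := by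
      intro c z
      ext j
      simp [he, MeasurableEquiv.piFinSuccAbove]
    have hlin : ∀ (a b : ℝ) (x' y' : Fin k → ℝ),
        e.symm (s * a + t * b, s • x' + t • y') = s • e.symm (a, x') + t • e.symm (b, y') := by
      intro a b x' y'
      rw [hcons, hcons, hcons]
      funext j
      refine Fin.cases ?_ (fun i => ?_) j <;>
        simp [Fin.cons_zero, Fin.cons_succ]
    -- Fubini for each function
    have hFub : ∀ F : (Fin (k+1) → ℝ) → ℝ≥0∞, Measurable F →
        (∫⁻ x, F x ^ (-m)) = ∫⁻ c : ℝ, ∫⁻ z : Fin k → ℝ, F (e.symm (c, z)) ^ (-m) := by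
      intro F hF
      rw [← hmp.lintegral_comp (meas_rpow_const hF _)]
      exact lintegral_prod _ ((meas_rpow_const (hF.comp e.symm.measurable) _).aemeasurable)
    -- sliced integrals
    set A : ℝ → ℝ≥0∞ := fun a => ∫⁻ z, g (e.symm (a, z)) ^ (-m) with hA
    set B : ℝ → ℝ≥0∞ := fun b => ∫⁻ z, W (e.symm (b, z)) ^ (-m) with hB
    set Φ : ℝ → ℝ≥0∞ := fun c => ∫⁻ z, H (e.symm (c, z)) ^ (-m) with hΦ
    have hAm : Measurable A :=
      Measurable.lintegral_prod_right (f := fun a z => g (e.symm (a, z)) ^ (-m))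
        (meas_rpow_const (hg.comp e.symm.measurable) _)
    have hBm : Measurable B :=
      Measurable.lintegral_prod_right (f := fun a z => W (e.symm (a, z)) ^ (-m))
        (meas_rpow_const (hW.comp e.symm.measurable) _)
    have hΦm : Measurable Φ :=
      Measurable.lintegral_prod_right (f := fun a z => H (e.symm (a, z)) ^ (-m))
        (meas_rpow_const (hH.comp e.symm.measurable) _)
    -- apply IH on slices
    have hslice : ∀ a b : ℝ, bblMean s t (m - k) (A a) (B b) ≤ Φ (s * a + t * b) := by
      intro a b
      refine IH m hm' (fun z => H (e.symm (s * a + t * b, z)))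
        (fun z => g (e.symm (a, z))) (fun z => W (e.symm (b, z)))
        (hH.comp (e.symm.measurable.comp measurable_prodMk_left))
        (hg.comp (e.symm.measurable.comp measurable_prodMk_left))
        (hW.comp (e.symm.measurable.comp measurable_prodMk_left))
        (fun x' y' => ?_)
      show H (e.symm (s * a + t * b, s • x' + t • y')) ≤ _
      rw [hlin a b x' y']
      exact hineq _ _
    -- flip to linear form
    set r := m - (k:ℝ) with hrdef
    set G1 : ℝ → ℝ≥0∞ := fun a => (A a) ^ (-(1/r)) with hG1
    set W1 : ℝ → ℝ≥0∞ := fun b => (B b) ^ (-(1/r)) with hW1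
    set H1 : ℝ → ℝ≥0∞ := fun c => (Φ c) ^ (-(1/r)) with hH1
    have hlin2 : ∀ a b : ℝ,
        H1 (s * a + t * b) ≤ ENNReal.ofReal s * G1 a + ENNReal.ofReal t * W1 b := by
      intro a b
      have h1 := hslice a b
      rw [bblMean, if_neg hrne] at h1
      have h2 := rpow_neg_antitone (c := 1/r) (by positivity) h1
      rw [← ENNReal.rpow_mul, show (-r) * (-(1/r)) = 1 by field_simp, ENNReal.rpow_one] at h2
      exact h2
    have hS1 := S1 hs ht hst (m := r) hr1 H1 G1 W1
      (meas_rpow_const hΦm _) (meas_rpow_const hAm _) (meas_rpow_const hBm _) hlin2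
    -- undo the double rpow
    have hundo : ∀ X : ℝ≥0∞, (X ^ (-(1/r))) ^ (-r) = X := by
      intro X
      rw [← ENNReal.rpow_mul, show (-(1/r)) * (-r) = 1 by field_simp, ENNReal.rpow_one]
    simp only [hG1, hW1, hH1, hundo] at hS1
    rw [hFub H hH, hFub g hg, hFub W hW]
    have hcast : m - ((k:ℕ)+1:ℕ) = r - 1 := by push_cast; ring
    rw [hcast]
    exact hS1


theorem borell_brascamp_lieb {n : ℕ} (hn : 1 ≤ n) (s t : ℝ)
    (hs : s ∈ Set.Icc (0:ℝ) 1) (ht : t ∈ Set.Icc (0:ℝ) 1) (hst : s + t = 1)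
    (H g W : EuclideanSpace ℝ (Fin n) → ℝ≥0∞)
    (hHm : Measurable H) (hgm : Measurable g) (hWm : Measurable W)
    (hgpos : ∀ x, 0 < g x) (hWpos : ∀ x, 0 < W x) (hHpos : ∀ x, 0 < H x)
    (hineq : ∀ x y, H (s • x + t • y) ≤ ENNReal.ofReal s * g x + ENNReal.ofReal t * W y)
    (hg1 : ∫⁻ x, g x ^ (-(n : ℝ)) = 1) (hW1 : ∫⁻ x, W x ^ (-(n : ℝ)) = 1) :
    1 ≤ ∫⁻ x, H x ^ (-(n : ℝ)) := by
  have hn0 : (0:ℝ) ≤ (n:ℝ) := Nat.cast_nonneg n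
  rcases eq_or_lt_of_le hs.1 with hs0 | hspos
  · -- s = 0, t = 1
    have hs0 : s = 0 := hs0.symm
    have ht1 : t = 1 := by linarith
    have hHW : ∀ y, H y ≤ W y := by
      intro y
      have := hineq y y
      rw [hs0, ht1] at this
      simpa using this
    calc (1:ℝ≥0∞) = ∫⁻ x, W x ^ (-(n:ℝ)) := hW1.symm
      _ ≤ ∫⁻ x, H x ^ (-(n:ℝ)) :=
          lintegral_mono fun y => rpow_neg_antitone hn0 (hHW y)
  rcases eq_or_lt_of_le ht.1 with ht0 | htpos
  · -- t = 0, s = 1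
    have ht0 : t = 0 := ht0.symm
    have hs1 : s = 1 := by linarith
    have hHg : ∀ y, H y ≤ g y := by
      intro y
      have := hineq y y
      rw [ht0, hs1] at this
      simpa using this
    calc (1:ℝ≥0∞) = ∫⁻ x, g x ^ (-(n:ℝ)) := hg1.symm
      _ ≤ ∫⁻ x, H x ^ (-(n:ℝ)) :=
          lintegral_mono fun y => rpow_neg_antitone hn0 (hHg y)
  -- main case
  set e := (MeasurableEquiv.toLp 2 (Fin n → ℝ)).symm with he
  have hmp : MeasurePreserving e.symm volume volume :=
    (EuclideanSpace.volume_preserving_symm_measurableEquiv_toLp (Fin n)).symm e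
  have hlin : ∀ x y : Fin n → ℝ,
      e.symm (s • x + t • y) = s • e.symm x + t • e.symm y := by
    intro x y
    rfl
  have htr : ∀ F : EuclideanSpace ℝ (Fin n) → ℝ≥0∞, Measurable F →
      (∫⁻ x, F x ^ (-(n:ℝ))) = ∫⁻ z : Fin n → ℝ, F (e.symm z) ^ (-(n:ℝ)) := by
    intro F hF
    exact (hmp.lintegral_comp (meas_rpow_const hF _)).symm
  have hmain := Sk hspos htpos hst n hn (n:ℝ) le_rfl
    (fun z => H (e.symm z)) (fun z => g (e.symm z)) (fun z => W (e.symm z))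
    (hHm.comp e.symm.measurable) (hgm.comp e.symm.measurable) (hWm.comp e.symm.measurable)
    (fun x y => by rw [hlin x y]; exact hineq _ _)
  rw [← htr g hgm, ← htr W hWm, ← htr H hHm, hg1, hW1] at hmain
  have hzero : (n:ℝ) - (n:ℕ) = 0 := by simp
  rw [hzero] at hmain
  rw [bblMean, if_pos rfl] at hmain
  simpa using hmain
end

section
/- Let W : ℝⁿ → (0, ∞) satisfy W(x)/|x| → ∞ as |x| → ∞, and let g : ℝⁿ → (0, ∞) be C¹. Define Q_h(g)(x) = inf_{z ∈ ℝⁿ} { g(x − h·z) + h·W(z) } for h > 0. Then for every x ∈ ℝⁿ, lim_{h → 0⁺} (Q_h(g)(x) − g(x))/h = −W*(∇g(x)), where W*(y) = sup_{z}{z·y − W(z)}. -/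
open MeasureTheory RealInnerProductSpace Filter

noncomputable def legendre {n : ℕ} (W : EuclideanSpace ℝ (Fin n) → ℝ)
    (y : EuclideanSpace ℝ (Fin n)) : ℝ :=
  ⨆ z, (⟪z, y⟫ - W z)

/-!
Write `y = ∇g(x)` and `S = W*(y)`. Testing the infimum with a fixed `z` bounds the difference
quotient above by `W z - ⟪y, z⟫ + o(1)`, hence eventually by `-S + ε`. For the lower bound,
`g (x + v) ≥ g x - K‖v‖` for all `v` (differentiability at `x` plus a lower bound for `g`),
which superlinearity of `W` beats outside a ball of radius `R`; on that ball the first-order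
expansion of `g` is uniform in `z`, so `g (x - h z) + h W z ≥ g x - h (S + ε)` for all `z`
once `h` is small.
-/

open Set Topology Bornology

lemma exists_forall_le_sub_mul_norm_of_superlinear {E : Type*} [NormedAddCommGroup E]
    {W : E → ℝ}
    (hW : Tendsto (fun z => W z / ‖z‖) (cocompact E) atTop) (K C : ℝ) :
    ∃ R, ∀ z, R ≤ ‖z‖ → C ≤ W z - K * ‖z‖ := by
  have hprod : Tendsto (fun z => ‖z‖ * (W z / ‖z‖ - K)) (cobounded E) atTop :=
    tendsto_norm_cobounded_atTop.atTop_mul_atTop₀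
      (tendsto_atTop_add_const_right _ (-K) (hW.mono_left Metric.cobounded_le_cocompact))
  have hsub : Tendsto (fun z => W z - K * ‖z‖) (cobounded E) atTop := by
    refine hprod.congr' ?_
    filter_upwards [eventually_cobounded_le_norm 1] with z hz
    field_simp
  simpa using hasBasis_cobounded_norm.eventually_iff.1 (hsub.eventually_ge_atTop C)

section NormedSpace

variable {E F : Type*} [NormedAddCommGroup E] [NormedSpace ℝ E]
  [NormedAddCommGroup F] [NormedSpace ℝ F]

lemma DifferentiableAt.exists_forall_sub_mul_norm_le {g : E → ℝ} {x : E}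
    (hg : DifferentiableAt ℝ g x) (hgb : BddBelow (range g)) :
    ∃ K, ∀ v, g x - K * ‖v‖ ≤ g (x + v) := by
  obtain ⟨m, hm⟩ := hgb
  obtain ⟨c, hc⟩ := hg.hasFDerivAt.isBigO_sub.bound
  obtain ⟨δ, hδ, hball⟩ := Metric.eventually_nhds_iff.1 hc
  have hmx : m ≤ g x := hm (mem_range_self x)
  refine ⟨max c 0 + (g x - m) / δ, fun v => ?_⟩
  have hK₁ : 0 ≤ (g x - m) / δ := div_nonneg (by linarith) hδ.le
  rcases lt_or_ge ‖v‖ δ with hv | hv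
  · have hclose := @hball (x + v) (by simpa using hv)
    simp only [Real.norm_eq_abs, add_sub_cancel_left, abs_le] at hclose
    nlinarith [le_max_left c 0, norm_nonneg v]
  · have hfar : g x - m ≤ (g x - m) / δ * ‖v‖ := by
      rw [div_mul_eq_mul_div, le_div_iff₀ hδ]
      exact mul_le_mul_of_nonneg_left hv (by linarith)
    nlinarith [hm (mem_range_self (x + v)), le_max_right c 0, norm_nonneg v]

lemma HasFDerivAt.eventually_forall_norm_le {f : E → F} {f' : E →L[ℝ] F} {x : E}
    (hf : HasFDerivAt f f' x) {ε : ℝ} (hε : 0 < ε) (R : ℝ) :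
    ∀ᶠ h : ℝ in 𝓝 0, ∀ z, ‖z‖ ≤ R → ‖f (x + h • z) - f x - h • f' z‖ ≤ ε * |h| := by
  have hR : 0 < |R| + 1 := by positivity
  obtain ⟨δ, hδ, hball⟩ :=
    Metric.eventually_nhds_iff.1 (hf.isLittleO.def (div_pos hε hR))
  refine Metric.eventually_nhds_iff.2 ⟨δ / (|R| + 1), by positivity, fun h hh z hz => ?_⟩
  have hzR : ‖z‖ ≤ |R| + 1 := by linarith [le_abs_self R]
  rw [Real.dist_eq, sub_zero, lt_div_iff₀ hR] at hh
  have hstep : ‖h • z‖ ≤ |h| * (|R| + 1) := by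
    rw [norm_smul, Real.norm_eq_abs]; gcongr
  have hclose := hball (show dist (x + h • z) x < δ by
    rw [dist_eq_norm, add_sub_cancel_left]; linarith)
  rw [add_sub_cancel_left, map_smul] at hclose
  calc ‖f (x + h • z) - f x - h • f' z‖ ≤ ε / (|R| + 1) * ‖h • z‖ := hclose
    _ ≤ ε / (|R| + 1) * (|h| * (|R| + 1)) := by gcongr
    _ = ε * |h| := by field_simp

end NormedSpace

section InnerProductSpace

variable {E : Type*} [NormedAddCommGroup E] [InnerProductSpace ℝ E]
  {g W : E → ℝ} {x y : E}

noncomputable def hopfLax (g W : E → ℝ) (h : ℝ) (x : E) : ℝ :=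
  ⨅ z, (g (x - h • z) + h * W z)

lemma bddAbove_range_inner_sub_of_superlinear (hWb : BddBelow (range W))
    (hW : Tendsto (fun z => W z / ‖z‖) (cocompact E) atTop) (y : E) :
    BddAbove (range fun z => ⟪z, y⟫ - W z) := by
  obtain ⟨m, hm⟩ := hWb
  obtain ⟨R, hR⟩ := exists_forall_le_sub_mul_norm_of_superlinear hW ‖y‖ 0
  refine ⟨max (R * ‖y‖ - m) 0, ?_⟩
  rintro _ ⟨z, rfl⟩
  have hCS : ⟪z, y⟫ ≤ ‖z‖ * ‖y‖ := real_inner_le_norm z y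
  rcases le_total ‖z‖ R with hz | hz
  · have hWz : m ≤ W z := hm (mem_range_self z)
    nlinarith [norm_nonneg y, le_max_left (R * ‖y‖ - m) 0]
  · have hfar := hR z hz
    nlinarith [le_max_right (R * ‖y‖ - m) 0]

lemma HasGradientAt.tendsto_sub_smul_slope [CompleteSpace E] (hg : HasGradientAt g y x) (z : E) :
    Tendsto (fun h : ℝ => (g (x - h • z) - g x) / h) (𝓝[>] 0) (𝓝 (-⟪y, z⟫)) := by
  have hline : HasDerivAt (fun h : ℝ => x - h • z) (-z) 0 := by
    simpa using ((hasDerivAt_id (0 : ℝ)).smul_const z).const_sub x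
  have hcomp : HasDerivAt (fun h : ℝ => g (x - h • z)) (-⟪y, z⟫) 0 := by
    have := hg.hasFDerivAt.comp_hasDerivAt_of_eq (0 : ℝ) hline (by simp)
    rwa [map_neg, InnerProductSpace.toDual_apply_apply] at this
  simpa [div_eq_inv_mul] using hcomp.tendsto_slope_zero_right

lemma HasGradientAt.eventually_forall_sub_mul_le [CompleteSpace E] (hg : HasGradientAt g y x)
    (hgb : BddBelow (range g)) (hW : Tendsto (fun z => W z / ‖z‖) (cocompact E) atTop)
    {S : ℝ} (hS : ∀ z, ⟪z, y⟫ - W z ≤ S) {ε : ℝ} (hε : 0 < ε) :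
    ∀ᶠ h in 𝓝[>] 0, ∀ z, g x - h * (S + ε) ≤ g (x - h • z) + h * W z := by
  obtain ⟨K, hK⟩ := hg.differentiableAt.exists_forall_sub_mul_norm_le hgb
  obtain ⟨R, hR⟩ := exists_forall_le_sub_mul_norm_of_superlinear hW K (-S)
  have hexpansion := hg.hasFDerivAt.eventually_forall_norm_le hε R
  filter_upwards [nhdsWithin_le_nhds hexpansion, self_mem_nhdsWithin] with h hexp (hh : 0 < h) z
  have hS' := hS z
  rcases le_total R ‖z‖ with hz | hz
  · have hcone := hK (-(h • z))
    rw [← sub_eq_add_neg, norm_neg, norm_smul, Real.norm_eq_abs, abs_of_pos hh] at hcone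
    have hfar := hR z hz
    nlinarith
  · have hnear := hexp (-z) (by rwa [norm_neg])
    rw [smul_neg, ← sub_eq_add_neg, Real.norm_eq_abs, abs_le, abs_of_pos hh] at hnear
    simp only [InnerProductSpace.toDual_apply_apply, inner_neg_right, smul_eq_mul,
      mul_neg, sub_neg_eq_add] at hnear
    nlinarith [real_inner_comm y z]

theorem HasGradientAt.tendsto_hopfLax_sub_div [CompleteSpace E] (hg : HasGradientAt g y x)
    (hgb : BddBelow (range g)) (hWb : BddBelow (range W))
    (hW : Tendsto (fun z => W z / ‖z‖) (cocompact E) atTop) :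
    Tendsto (fun h => (hopfLax g W h x - g x) / h) (𝓝[>] 0) (𝓝 (-⨆ z, (⟪z, y⟫ - W z))) := by
  set S := ⨆ z, (⟪z, y⟫ - W z)
  have hS : ∀ z, ⟪z, y⟫ - W z ≤ S := le_ciSup (bddAbove_range_inner_sub_of_superlinear hWb hW y)
  have hlower : ∀ ε > 0, ∀ᶠ h in 𝓝[>] 0, -(S + ε) ≤ (hopfLax g W h x - g x) / h := by
    intro ε hε
    filter_upwards [hg.eventually_forall_sub_mul_le hgb hW hS hε, self_mem_nhdsWithin]
      with h hbound (hh : 0 < h)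
    have hinf : g x - h * (S + ε) ≤ hopfLax g W h x := le_ciInf hbound
    rw [le_div_iff₀ hh]
    linarith
  have hupper : ∀ z, ∀ᶠ h in 𝓝[>] 0,
      (hopfLax g W h x - g x) / h ≤ (g (x - h • z) - g x) / h + W z := by
    intro z
    filter_upwards [hg.eventually_forall_sub_mul_le hgb hW hS one_pos, self_mem_nhdsWithin]
      with h hbound (hh : 0 < h)
    have hinf : hopfLax g W h x ≤ g (x - h • z) + h * W z :=
      ciInf_le ⟨_, forall_mem_range.2 hbound⟩ z
    calc (hopfLax g W h x - g x) / h ≤ (g (x - h • z) + h * W z - g x) / h := by gcongr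
      _ = (g (x - h • z) - g x) / h + W z := by field_simp; ring
  refine tendsto_order.2 ⟨fun a ha => ?_, fun b hb => ?_⟩
  · filter_upwards [hlower ((-S - a) / 2) (by linarith)] with h hh
    linarith
  · obtain ⟨z, hz⟩ := exists_lt_of_lt_ciSup (show -b < S by linarith)
    have hslope := ((hg.tendsto_sub_smul_slope z).add_const (W z)).eventually_lt_const
      (show -⟪y, z⟫ + W z < b by linarith [real_inner_comm y z])
    filter_upwards [hupper z, hslope] with h h₁ h₂
    linarith

end InnerProductSpace

theorem hopf_lax_derivative {n : ℕ}
    (W : EuclideanSpace ℝ (Fin n) → ℝ) (hWpos : ∀ x, 0 < W x)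
    (hWsuper : Tendsto (fun x : EuclideanSpace ℝ (Fin n) => W x / ‖x‖)
      (cocompact _) atTop)
    (g : EuclideanSpace ℝ (Fin n) → ℝ) (hgpos : ∀ x, 0 < g x)
    (hg : ContDiff ℝ 1 g) (x : EuclideanSpace ℝ (Fin n)) :
    Tendsto (fun h : ℝ => ((⨅ z, (g (x - h • z) + h * W z)) - g x) / h)
      (nhdsWithin 0 (Set.Ioi 0)) (nhds (-(legendre W (gradient g x)))) :=
  ((hg.differentiable one_ne_zero x).hasGradientAt).tendsto_hopfLax_sub_div
    ⟨0, forall_mem_range.2 fun z => (hgpos z).le⟩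
    ⟨0, forall_mem_range.2 fun z => (hWpos z).le⟩ hWsuper
end
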